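/- arXiv:2511.02585 — 2 statements merged into one kernel-verified Lean document; each statement's English description precedes it below -/
import Mathlib

section
/- Assume m ≥ 2. Then for every t ∈ V_m: 2·ξ⁺_2(t) = ξ⁻_1(t)·(ξ⁻_1(t) − ξ⁻_1(−1)) and 2·ξ⁻_2(t) = ξ⁺_1(t)·(ξ⁺_1(t) − ξ⁺_1(1)) in R, where ξ⁻_1(−1) and ξ⁺_1(1) are the values of ξ⁻_1 at vertex −1 and of ξ⁺_1 at vertex 1, respectively. -/
noncomputable section

open Finset MvPolynomial

/-- The coefficient ring `R = ℚ[α,δ]`, realized as polynomials in two variables. -/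
abbrev Rpoly : Type := MvPolynomial (Fin 2) ℚ

/-- The variable `α`. -/
def va : Rpoly := X 0

/-- The variable `δ`. -/
def vd : Rpoly := X 1

/-- `P⁻(a,b) = ∏_{k=a}^{b} (−α + k·δ)`. -/
def Pneg (a b : ℤ) : Rpoly :=
  ∏ k ∈ Finset.Icc a b, (-va + MvPolynomial.C (k : ℚ) * vd)

/-- `P⁺(a,b) = ∏_{k=a}^{b} (α + k·δ)`. -/
def Ppos (a b : ℤ) : Rpoly :=
  ∏ k ∈ Finset.Icc a b, (va + MvPolynomial.C (k : ℚ) * vd)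

/-- Binomial coefficient `C(n,q)` (all uses have `n ≥ 0`). -/
def B (n : ℤ) (q : ℕ) : ℚ := (n.toNat).choose q

/-- The Knutson–Tao class `ξ⁺_q = ξ(m+q, m−q)`, as a function on vertices `t`
(the vertex `t` encodes the pair `(m+t, m−t)`). -/
def xiP (m : ℤ) (q : ℕ) (t : ℤ) : Rpoly :=
  if (q : ℤ) ≤ t ∧ t ≤ m then
    MvPolynomial.C (B (⌈((t : ℚ) - (q : ℚ) + 1) / 2⌉ + q - 1) q) *
      Pneg (⌈((t : ℚ) - (q : ℚ) + 1) / 2⌉ - 1) (⌈((t : ℚ) - (q : ℚ) + 1) / 2⌉ + q - 2)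
  else if -m ≤ t ∧ t ≤ -((q : ℤ) + 1) then
    MvPolynomial.C (B (⌈(-(t : ℚ) - (q : ℚ)) / 2⌉ + q - 1) q) *
      Ppos (⌈(-(t : ℚ) - (q : ℚ)) / 2⌉ + 1) (⌈(-(t : ℚ) - (q : ℚ)) / 2⌉ + q)
  else 0

/-- The Knutson–Tao class `ξ⁻_q = ξ(m−q, m+q)`. -/
def xiM (m : ℤ) (q : ℕ) (t : ℤ) : Rpoly :=
  if (q : ℤ) + 1 ≤ t ∧ t ≤ m then
    MvPolynomial.C (B (⌈((t : ℚ) - (q : ℚ)) / 2⌉ + q - 1) q) *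
      Pneg (⌈((t : ℚ) - (q : ℚ)) / 2⌉) (⌈((t : ℚ) - (q : ℚ)) / 2⌉ + q - 1)
  else if -m ≤ t ∧ t ≤ -(q : ℤ) then
    MvPolynomial.C (B (⌈(-(t : ℚ) - (q : ℚ) + 1) / 2⌉ + q - 1) q) *
      Ppos (⌈(-(t : ℚ) - (q : ℚ) + 1) / 2⌉) (⌈(-(t : ℚ) - (q : ℚ) + 1) / 2⌉ + q - 1)
  else 0

/-- The weight of the vertex `t`: `w(t) = ((1−2t)/2)·α + (t(t−1)/2)·δ`. -/
def w (t : ℤ) : Rpoly :=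
  MvPolynomial.C ((1 - 2 * (t : ℚ)) / 2) * va +
    MvPolynomial.C (((t : ℚ) * ((t : ℚ) - 1)) / 2) * vd

/-! On each half `0 ≤ t` and `t < 0` of `V_m`, all ceilings occurring in `ξ⁺_q(t)` and `ξ⁻_q(t)`
are determined by one integer `c`, and the closed formula of the nonvanishing range stays valid
on the whole half, because its binomial coefficient vanishes where the class does. Both
identities thus become polynomial identities in `c`, `α`, `δ`; for instance, for `t ≥ 0` and
`c = ⌊t/2⌋` one has `ξ⁻_1(t) = c(cδ - α)`, `ξ⁻_1(t) - ξ⁻_1(-1) = (c+1)((c-1)δ - α)` and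
`2ξ⁺_2(t) = (c+1)c((c-1)δ - α)(cδ - α)`. -/

theorem Int.ceil_intCast_div_two_eq {K : Type*} [Field K] [LinearOrder K] [IsStrictOrderedRing K]
    [FloorRing K] {x c : ℤ} (h₁ : x ≤ 2 * c) (h₂ : 2 * c ≤ x + 1) : ⌈(x : K) / 2⌉ = c := by
  have h₁' : (x : K) ≤ 2 * c := by exact_mod_cast h₁
  have h₂' : (2 * c : K) ≤ x + 1 := by exact_mod_cast h₂
  rw [Int.ceil_eq_iff]
  constructor <;> linarith

theorem B_eq_zero_of_lt {n : ℤ} {q : ℕ} (hq : 0 < q) (h : n < q) : B n q = 0 := by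
  rw [B, Nat.choose_eq_zero_of_lt (by omega), Nat.cast_zero]

theorem B_one {n : ℤ} (hn : 0 ≤ n) : B n 1 = n := by
  rw [B, Nat.choose_one_right, ← Int.cast_natCast, Int.toNat_of_nonneg hn]

theorem two_mul_C_B_two {n : ℤ} (hn : 0 ≤ n) : 2 * C (B n 2) = (n * (n - 1) : Rpoly) := by
  rw [B, Nat.cast_choose_two, ← Int.cast_natCast, Int.toNat_of_nonneg hn, ← map_ofNat C 2,
    ← map_mul, mul_div_cancel₀ _ two_ne_zero]
  simp

theorem Pneg_self (a : ℤ) : Pneg a a = -va + a * vd := by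
  simp [Pneg]

theorem Ppos_self (a : ℤ) : Ppos a a = va + a * vd := by
  simp [Ppos]

theorem Pneg_self_add_one (a : ℤ) : Pneg a (a + 1) = (-va + a * vd) * (-va + (a + 1) * vd) := by
  simp [Pneg, Int.Icc_eq_pair]

theorem Ppos_self_add_one (a : ℤ) : Ppos a (a + 1) = (va + a * vd) * (va + (a + 1) * vd) := by
  simp [Ppos, Int.Icc_eq_pair]

section ClosedForms

variable {m t c : ℤ} {q : ℕ}

/-! In each lemma `c` is the ceiling `⌈x / 2⌉` of the definition, characterized by
`x ≤ 2 * c ≤ x + 1`. -/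

theorem xiP_of_nonneg (h₀ : 0 ≤ t) (ht : t ≤ m) (hc₁ : t - q + 1 ≤ 2 * c)
    (hc₂ : 2 * c ≤ t - q + 2) :
    xiP m q t = C (B (c + q - 1) q) * Pneg (c - 1) (c + q - 2) := by
  have hceil : ⌈((t : ℚ) - q + 1) / 2⌉ = c := by
    exact_mod_cast Int.ceil_intCast_div_two_eq (K := ℚ) (x := t - q + 1) hc₁ (by omega)
  rw [xiP, hceil]
  split_ifs with h₁ h₂
  · rfl
  · omega
  · rw [B_eq_zero_of_lt (by omega) (by omega), map_zero, zero_mul]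

theorem xiM_of_nonneg (hq : 1 ≤ q) (h₀ : 0 ≤ t) (ht : t ≤ m) (hc₁ : t - q ≤ 2 * c)
    (hc₂ : 2 * c ≤ t - q + 1) :
    xiM m q t = C (B (c + q - 1) q) * Pneg c (c + q - 1) := by
  have hceil : ⌈((t : ℚ) - q) / 2⌉ = c := by
    exact_mod_cast Int.ceil_intCast_div_two_eq (K := ℚ) (x := t - q) hc₁ hc₂
  rw [xiM, hceil]
  split_ifs with h₁ h₂
  · rfl
  · omega
  · rw [B_eq_zero_of_lt (by omega) (by omega), map_zero, zero_mul]

theorem xiP_of_neg (h₀ : t < 0) (ht : -m ≤ t) (hc₁ : -t - q ≤ 2 * c)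
    (hc₂ : 2 * c ≤ -t - q + 1) :
    xiP m q t = C (B (c + q - 1) q) * Ppos (c + 1) (c + q) := by
  have hceil : ⌈(-(t : ℚ) - q) / 2⌉ = c := by
    exact_mod_cast Int.ceil_intCast_div_two_eq (K := ℚ) (x := -t - q) hc₁ hc₂
  rw [xiP, hceil]
  split_ifs with h₁ h₂
  · omega
  · rfl
  · rw [B_eq_zero_of_lt (by omega) (by omega), map_zero, zero_mul]

theorem xiM_of_neg (hq : 1 ≤ q) (h₀ : t < 0) (ht : -m ≤ t) (hc₁ : -t - q + 1 ≤ 2 * c)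
    (hc₂ : 2 * c ≤ -t - q + 2) :
    xiM m q t = C (B (c + q - 1) q) * Ppos c (c + q - 1) := by
  have hceil : ⌈(-(t : ℚ) - q + 1) / 2⌉ = c := by
    exact_mod_cast Int.ceil_intCast_div_two_eq (K := ℚ) (x := -t - q + 1) hc₁ (by omega)
  rw [xiM, hceil]
  split_ifs with h₁ h₂
  · omega
  · rfl
  · rw [B_eq_zero_of_lt (by omega) (by omega), map_zero, zero_mul]

theorem xiP_two_of_nonneg (h₀ : 0 ≤ t) (ht : t ≤ m) (hc₁ : 2 * c ≤ t) (hc₂ : t ≤ 2 * c + 1) :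
    xiP m 2 t = C (B (c + 1) 2) * ((-va + (c - 1 : Rpoly) * vd) * (-va + (c : Rpoly) * vd)) := by
  rw [xiP_of_nonneg h₀ ht (c := c) (by omega) (by omega),
    show c + ((2 : ℕ) : ℤ) - 1 = c + 1 by omega, show c + ((2 : ℕ) : ℤ) - 2 = c - 1 + 1 by omega,
    Pneg_self_add_one]
  push_cast
  ring

theorem xiP_two_of_neg (h₀ : t < 0) (ht : -m ≤ t) (hc₁ : -t ≤ 2 * c) (hc₂ : 2 * c ≤ -t + 1) :
    xiP m 2 t = C (B c 2) * ((va + (c : Rpoly) * vd) * (va + (c + 1 : Rpoly) * vd)) := by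
  rw [xiP_of_neg h₀ ht (c := c - 1) (by omega) (by omega),
    show c - 1 + ((2 : ℕ) : ℤ) - 1 = c by omega, show c - 1 + 1 = c by omega,
    show c - 1 + ((2 : ℕ) : ℤ) = c + 1 by omega, Ppos_self_add_one]

theorem xiM_one_of_nonneg (h₀ : 0 ≤ t) (ht : t ≤ m) (hc₁ : 2 * c ≤ t) (hc₂ : t ≤ 2 * c + 1) :
    xiM m 1 t = c * (-va + (c : Rpoly) * vd) := by
  rw [xiM_of_nonneg le_rfl h₀ ht (c := c) (by omega) (by omega),
    show c + ((1 : ℕ) : ℤ) - 1 = c by omega, B_one (by omega), Pneg_self, map_intCast]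

theorem xiM_one_of_neg (h₀ : t < 0) (ht : -m ≤ t) (hc₁ : -t ≤ 2 * c) (hc₂ : 2 * c ≤ -t + 1) :
    xiM m 1 t = c * (va + (c : Rpoly) * vd) := by
  rw [xiM_of_neg le_rfl h₀ ht (c := c) (by omega) (by omega),
    show c + ((1 : ℕ) : ℤ) - 1 = c by omega, B_one (by omega), Ppos_self, map_intCast]

theorem xiP_one_of_nonneg (h₀ : 0 ≤ t) (ht : t ≤ m) (hc₁ : t ≤ 2 * c) (hc₂ : 2 * c ≤ t + 1) :
    xiP m 1 t = c * (-va + (c - 1 : Rpoly) * vd) := by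
  rw [xiP_of_nonneg h₀ ht (c := c) (by omega) (by omega),
    show c + ((1 : ℕ) : ℤ) - 1 = c by omega, show c + ((1 : ℕ) : ℤ) - 2 = c - 1 by omega,
    B_one (by omega), Pneg_self, map_intCast]
  push_cast
  ring

theorem xiM_two_of_nonneg (h₀ : 0 ≤ t) (ht : t ≤ m) (hc₁ : t ≤ 2 * c) (hc₂ : 2 * c ≤ t + 1) :
    xiM m 2 t = C (B c 2) * ((-va + (c - 1 : Rpoly) * vd) * (-va + (c : Rpoly) * vd)) := by
  rw [xiM_of_nonneg one_le_two h₀ ht (c := c - 1) (by omega) (by omega),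
    show c - 1 + ((2 : ℕ) : ℤ) - 1 = c - 1 + 1 by omega, Pneg_self_add_one,
    show c - 1 + 1 = c by omega]
  push_cast
  ring

theorem xiP_one_of_neg (h₀ : t < 0) (ht : -m ≤ t) (hc₁ : -t - 1 ≤ 2 * c) (hc₂ : 2 * c ≤ -t) :
    xiP m 1 t = c * (va + (c + 1 : Rpoly) * vd) := by
  rw [xiP_of_neg h₀ ht (c := c) (by omega) (by omega),
    show c + ((1 : ℕ) : ℤ) - 1 = c by omega, show c + ((1 : ℕ) : ℤ) = c + 1 by omega,
    B_one (by omega), Ppos_self, map_intCast]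
  push_cast
  ring

theorem xiM_two_of_neg (h₀ : t < 0) (ht : -m ≤ t) (hc₁ : -t - 1 ≤ 2 * c) (hc₂ : 2 * c ≤ -t) :
    xiM m 2 t = C (B (c + 1) 2) * ((va + (c : Rpoly) * vd) * (va + (c + 1 : Rpoly) * vd)) := by
  rw [xiM_of_neg one_le_two h₀ ht (c := c) (by omega) (by omega),
    show c + ((2 : ℕ) : ℤ) - 1 = c + 1 by omega, Ppos_self_add_one]

end ClosedForms

variable {m t : ℤ}

theorem two_mul_xiP_two (hm : 1 ≤ m) (h₁ : -m ≤ t) (h₂ : t ≤ m) :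
    2 * xiP m 2 t = xiM m 1 t * (xiM m 1 t - xiM m 1 (-1)) := by
  rw [xiM_one_of_neg (t := -1) (c := 1) (by omega) (by omega) (by omega) (by omega)]
  rcases le_or_gt 0 t with h₀ | h₀
  · rw [xiP_two_of_nonneg h₀ h₂ (c := t / 2) (by omega) (by omega),
      xiM_one_of_nonneg h₀ h₂ (c := t / 2) (by omega) (by omega), ← mul_assoc,
      two_mul_C_B_two (by omega)]
    push_cast
    ring
  · rw [xiP_two_of_neg h₀ h₁ (c := (-t + 1) / 2) (by omega) (by omega),
      xiM_one_of_neg h₀ h₁ (c := (-t + 1) / 2) (by omega) (by omega), ← mul_assoc,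
      two_mul_C_B_two (by omega)]
    push_cast
    ring

theorem two_mul_xiM_two (hm : 1 ≤ m) (h₁ : -m ≤ t) (h₂ : t ≤ m) :
    2 * xiM m 2 t = xiP m 1 t * (xiP m 1 t - xiP m 1 1) := by
  rw [xiP_one_of_nonneg (t := 1) (c := 1) (by omega) (by omega) (by omega) (by omega)]
  rcases le_or_gt 0 t with h₀ | h₀
  · rw [xiM_two_of_nonneg h₀ h₂ (c := (t + 1) / 2) (by omega) (by omega),
      xiP_one_of_nonneg h₀ h₂ (c := (t + 1) / 2) (by omega) (by omega), ← mul_assoc,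
      two_mul_C_B_two (by omega)]
    push_cast
    ring
  · rw [xiM_two_of_neg h₀ h₁ (c := -t / 2) (by omega) (by omega),
      xiP_one_of_neg h₀ h₁ (c := -t / 2) (by omega) (by omega), ← mul_assoc,
      two_mul_C_B_two (by omega)]
    push_cast
    ring

/-- for `m ≥ 2`, `2·ξ⁺_2 = ξ⁻_1·(ξ⁻_1 − ξ⁻_1(−1))` and
`2·ξ⁻_2 = ξ⁺_1·(ξ⁺_1 − ξ⁺_1(1))` pointwise on `V_m`. -/
theorem statement5 (m : ℕ) (hm : 2 ≤ m) (t : ℤ)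
    (ht1 : -(m : ℤ) ≤ t) (ht2 : t ≤ (m : ℤ)) :
    2 * xiP m 2 t = xiM m 1 t * (xiM m 1 t - xiM m 1 (-1)) ∧
    2 * xiM m 2 t = xiP m 1 t * (xiP m 1 t - xiP m 1 1) :=
  ⟨two_mul_xiP_two (by omega) ht1 ht2, two_mul_xiM_two (by omega) ht1 ht2⟩
end
end

section
/- Let q be an even integer with 0 < q < m. Then for every t ∈ V_m, ξ⁻_q(t)·(ξ⁻_1(t) − ξ⁻_1(−q)) = q·ξ⁺_{q+1}(t) + ξ⁻_{q+1}(t) in R, where ξ⁻_1(−q) ∈ R is the value of ξ⁻_1 at the vertex −q. -/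
noncomputable section

open Finset MvPolynomial

/-!
Write `q = 2r + 2`. For `|t| ≤ q` both sides vanish (at `t = -q` because the second factor
does). Otherwise every class involved is a binomial coefficient times a window of consecutive
factors `-α + kδ` (for `t > q`) or `α + kδ` (for `t < -q`). As `q` is even,
`ξ⁻_1(-q) = (r+1)(α + (r+1)δ)`, and `ξ⁻_1(t) - ξ⁻_1(-q)`, a difference of two values of
`c ↦ c(∓α + cδ)`, is a multiple of a single linear form. Peeling one factor off the longer
windows turns both sides into the same window times that linear form, and what is left is a
binomial identity, which depends on the parity of `|t| - q`.
-/

theorem Int.prod_Icc_eq_mul_prod_Icc_add_one {M : Type*} [CommMonoid M] (f : ℤ → M) {a b : ℤ}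
    (h : a ≤ b) : ∏ k ∈ Icc a b, f k = f a * ∏ k ∈ Icc (a + 1) b, f k := by
  rw [← Finset.insert_Icc_succ_left_eq_Icc h, Finset.prod_insert (by simp), Order.succ_eq_add_one]

theorem Int.prod_Icc_eq_prod_Icc_sub_one_mul {M : Type*} [CommMonoid M] (f : ℤ → M) {a b : ℤ}
    (h : a ≤ b) : ∏ k ∈ Icc a b, f k = (∏ k ∈ Icc a (b - 1), f k) * f b := by
  have hIcc := Finset.insert_Icc_right_eq_Icc_succ (a := a) (b := b - 1)
    (by rwa [Order.succ_eq_add_one, sub_add_cancel])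
  rw [Order.succ_eq_add_one, sub_add_cancel] at hIcc
  rw [← hIcc, Finset.prod_insert (by simp), mul_comm]

theorem Int.ceil_intCast_div_two {n c : ℤ} (h₁ : 2 * c - 1 ≤ n) (h₂ : n ≤ 2 * c) :
    ⌈(n : ℚ) / 2⌉ = c := by
  have h₁' : ((2 * c - 1 : ℤ) : ℚ) ≤ n := by exact_mod_cast h₁
  have h₂' : (n : ℚ) ≤ ((2 * c : ℤ) : ℚ) := by exact_mod_cast h₂
  push_cast at h₁' h₂'
  rw [Int.ceil_eq_iff]
  constructor <;> linarith

theorem Nat.choose_add_succ_mul (e k : ℕ) :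
    (e + k).choose (k + 1) * (k + 1) = (e + k).choose k * e := by
  simpa using Nat.choose_succ_right_eq (e + k) k

theorem Nat.add_mul_choose_add (e k : ℕ) :
    (e + k) * (e + k).choose k = k * (e + k + 1).choose (k + 1) + (e + k).choose (k + 1) := by
  linear_combination k * (Nat.choose_succ_succ' (e + k) k).symm + (Nat.choose_add_succ_mul e k).symm

theorem Nat.succ_mul_choose_add (e k : ℕ) :
    (e + 1) * (e + k).choose k = k * (e + k).choose (k + 1) + (e + k + 1).choose (k + 1) := by
  linear_combination (Nat.choose_succ_succ' (e + k) k).symm + (Nat.choose_add_succ_mul e k).symm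

lemma Pneg_eq_mul_Pneg_add_one {a b : ℤ} (h : a ≤ b) :
    Pneg a b = (-va + a * vd) * Pneg (a + 1) b := by
  rw [Pneg, Pneg, Int.prod_Icc_eq_mul_prod_Icc_add_one _ h, map_intCast]

lemma Pneg_eq_Pneg_sub_one_mul {a b : ℤ} (h : a ≤ b) :
    Pneg a b = Pneg a (b - 1) * (-va + b * vd) := by
  rw [Pneg, Pneg, Int.prod_Icc_eq_prod_Icc_sub_one_mul _ h, map_intCast]

lemma Ppos_eq_mul_Ppos_add_one {a b : ℤ} (h : a ≤ b) :
    Ppos a b = (va + a * vd) * Ppos (a + 1) b := by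
  rw [Ppos, Ppos, Int.prod_Icc_eq_mul_prod_Icc_add_one _ h, map_intCast]

lemma Ppos_eq_Ppos_sub_one_mul {a b : ℤ} (h : a ≤ b) :
    Ppos a b = Ppos a (b - 1) * (va + b * vd) := by
  rw [Ppos, Ppos, Int.prod_Icc_eq_prod_Icc_sub_one_mul _ h, map_intCast]

lemma B_natCast (n q : ℕ) : B n q = n.choose q := by
  rw [B, Int.toNat_natCast]

lemma xiM_eq_zero {m t : ℤ} {q : ℕ} (h₁ : -q < t) (h₂ : t ≤ q) : xiM m q t = 0 := by
  rw [xiM, if_neg (by omega), if_neg (by omega)]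

lemma xiP_eq_zero {m t : ℤ} {q : ℕ} (h₁ : -(q + 1) < t) (h₂ : t < q) : xiP m q t = 0 := by
  rw [xiP, if_neg (by omega), if_neg (by omega)]

/- In the four closed forms below `c = 0` is allowed: there the class vanishes, and so does the
binomial coefficient. -/

lemma xiM_succ_eq_of_pos {m t : ℤ} {p c : ℕ} (hc₁ : 2 * c ≤ t - p)
    (hc₂ : t - p ≤ 2 * c + 1) (htm : t ≤ m) :
    xiM m (p + 1) t = ((c + p).choose (p + 1) : Rpoly) * Pneg c (c + p) := by
  rcases Nat.eq_zero_or_pos c with rfl | hc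
  · rw [Nat.choose_eq_zero_of_lt (by omega), Nat.cast_zero, zero_mul,
      xiM_eq_zero (by omega) (by omega)]
  have hceil : ⌈((t : ℚ) - ((p + 1 : ℕ) : ℚ)) / 2⌉ = c := by
    rw [show ((t : ℚ) - ((p + 1 : ℕ) : ℚ)) / 2 = ((t - (p + 1) : ℤ) : ℚ) / 2 by
      push_cast; ring]
    exact Int.ceil_intCast_div_two (by omega) (by omega)
  rw [xiM, if_pos (by omega), hceil,
    show (c : ℤ) + ((p + 1 : ℕ) : ℤ) - 1 = ((c + p : ℕ) : ℤ) by push_cast; ring,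
    B_natCast, map_natCast, Nat.cast_add]

lemma xiM_succ_eq_of_neg {m t : ℤ} {p c : ℕ} (hc₁ : 2 * c - 1 ≤ -t - p)
    (hc₂ : -t - p ≤ 2 * c) (hmt : -m ≤ t) :
    xiM m (p + 1) t = ((c + p).choose (p + 1) : Rpoly) * Ppos c (c + p) := by
  rcases Nat.eq_zero_or_pos c with rfl | hc
  · rw [Nat.choose_eq_zero_of_lt (by omega), Nat.cast_zero, zero_mul,
      xiM_eq_zero (by omega) (by omega)]
  have hceil : ⌈(-(t : ℚ) - ((p + 1 : ℕ) : ℚ) + 1) / 2⌉ = c := by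
    rw [show (-(t : ℚ) - ((p + 1 : ℕ) : ℚ) + 1) / 2 = ((-t - p : ℤ) : ℚ) / 2 by
      push_cast; ring]
    exact Int.ceil_intCast_div_two (by omega) (by omega)
  rw [xiM, if_neg (by omega), if_pos (by omega), hceil,
    show (c : ℤ) + ((p + 1 : ℕ) : ℤ) - 1 = ((c + p : ℕ) : ℤ) by push_cast; ring,
    B_natCast, map_natCast, Nat.cast_add]

lemma xiP_succ_eq_of_pos {m t : ℤ} {p c : ℕ} (hc₁ : 2 * c - 1 ≤ t - p)
    (hc₂ : t - p ≤ 2 * c) (htm : t ≤ m) :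
    xiP m (p + 1) t = ((c + p).choose (p + 1) : Rpoly) * Pneg (c - 1) (c + p - 1) := by
  rcases Nat.eq_zero_or_pos c with rfl | hc
  · rw [Nat.choose_eq_zero_of_lt (by omega), Nat.cast_zero, zero_mul,
      xiP_eq_zero (by omega) (by omega)]
  have hceil : ⌈((t : ℚ) - ((p + 1 : ℕ) : ℚ) + 1) / 2⌉ = c := by
    rw [show ((t : ℚ) - ((p + 1 : ℕ) : ℚ) + 1) / 2 = ((t - p : ℤ) : ℚ) / 2 by
      push_cast; ring]
    exact Int.ceil_intCast_div_two (by omega) (by omega)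
  rw [xiP, if_pos (by omega), hceil,
    show (c : ℤ) + ((p + 1 : ℕ) : ℤ) - 1 = ((c + p : ℕ) : ℤ) by push_cast; ring,
    show (c : ℤ) + ((p + 1 : ℕ) : ℤ) - 2 = c + p - 1 by push_cast; ring,
    B_natCast, map_natCast]

lemma xiP_succ_eq_of_neg {m t : ℤ} {p c : ℕ} (hc₁ : 2 * c ≤ -t - p)
    (hc₂ : -t - p ≤ 2 * c + 1) (hmt : -m ≤ t) :
    xiP m (p + 1) t = ((c + p).choose (p + 1) : Rpoly) * Ppos (c + 1) (c + p + 1) := by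
  rcases Nat.eq_zero_or_pos c with rfl | hc
  · rw [Nat.choose_eq_zero_of_lt (by omega), Nat.cast_zero, zero_mul,
      xiP_eq_zero (by omega) (by omega)]
  have hceil : ⌈(-(t : ℚ) - ((p + 1 : ℕ) : ℚ)) / 2⌉ = c := by
    rw [show (-(t : ℚ) - ((p + 1 : ℕ) : ℚ)) / 2 = ((-t - p - 1 : ℤ) : ℚ) / 2 by
      push_cast; ring]
    exact Int.ceil_intCast_div_two (by omega) (by omega)
  rw [xiP, if_neg (by omega), if_pos (by omega), hceil,
    show (c : ℤ) + ((p + 1 : ℕ) : ℤ) - 1 = ((c + p : ℕ) : ℤ) by push_cast; ring,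
    show (c : ℤ) + ((p + 1 : ℕ) : ℤ) = c + p + 1 by push_cast; ring,
    B_natCast, map_natCast]

lemma xiM_one_eq_of_pos {m t : ℤ} {c : ℕ} (hc₁ : 2 * c ≤ t) (hc₂ : t ≤ 2 * c + 1)
    (htm : t ≤ m) : xiM m 1 t = c * (-va + c * vd) := by
  simpa [Pneg] using xiM_succ_eq_of_pos (m := m) (p := 0) (c := c) (by omega) (by omega) htm

lemma xiM_one_eq_of_neg {m t : ℤ} {c : ℕ} (hc₁ : 2 * c - 1 ≤ -t) (hc₂ : -t ≤ 2 * c)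
    (hmt : -m ≤ t) : xiM m 1 t = c * (va + c * vd) := by
  simpa [Ppos] using xiM_succ_eq_of_neg (m := m) (p := 0) (c := c) (by omega) (by omega) hmt

def ChevalleyFormula (m : ℤ) (q : ℕ) (t : ℤ) : Prop :=
  xiM m q t * (xiM m 1 t - xiM m 1 (-q)) = q * xiP m (q + 1) t + xiM m (q + 1) t

lemma chevalleyFormula_of_abs_le {m t : ℤ} {q : ℕ} (h₁ : -q ≤ t) (h₂ : t ≤ q) :
    ChevalleyFormula m q t := by
  rw [ChevalleyFormula, xiP_eq_zero (q := q + 1) (by omega) (by omega),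
    xiM_eq_zero (q := q + 1) (by omega) (by omega)]
  rcases h₁.lt_or_eq with hlt | rfl
  · rw [xiM_eq_zero hlt h₂]; ring
  · rw [sub_self]; ring

section

variable {m t : ℤ} (r e : ℕ)

lemma chevalleyFormula_of_eq_add_even (ht : t = 2 * r + 2 + (2 * e + 2)) (htm : t ≤ m) :
    ChevalleyFormula m (2 * r + 2) t := by
  rw [ChevalleyFormula, xiM_succ_eq_of_pos (p := 2 * r + 1) (c := e + 1) (by omega) (by omega) htm,
    xiM_one_eq_of_pos (t := t) (c := r + e + 2) (by omega) (by omega) htm,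
    xiM_one_eq_of_neg (c := r + 1) (by omega) (by omega) (by omega),
    xiP_succ_eq_of_pos (c := e + 1) (by omega) (by omega) htm,
    xiM_succ_eq_of_pos (c := e + 1) (by omega) (by omega) htm]
  have hbot := Pneg_eq_mul_Pneg_add_one (a := e) (b := e + 2 * r + 2) (by omega)
  have htop := Pneg_eq_Pneg_sub_one_mul (a := e + 1) (b := e + 2 * r + 3) (by omega)
  have hbinom : (e + 2 * r + 2 + 1 : Rpoly) * (e + 2 * r + 2).choose (2 * r + 2) =
      (e + 2 * r + 2 + 1).choose (2 * r + 2 + 1) * (2 * r + 2 + 1) := by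
    exact_mod_cast Nat.add_one_mul_choose_eq (e + 2 * r + 2) (2 * r + 2)
  push_cast at hbot htop ⊢
  linear_combination (norm := ring_nf)
    -(2 * r + 2) * ((e + 2 * r + 3).choose (2 * r + 3) : Rpoly) * hbot
    - ((e + 2 * r + 3).choose (2 * r + 3) : Rpoly) * htop
    + (-va + (e + 1) * vd) * Pneg (e + 1) (e + 2 * r + 2) * hbinom

lemma chevalleyFormula_of_eq_add_odd (ht : t = 2 * r + 2 + (2 * e + 1)) (htm : t ≤ m) :
    ChevalleyFormula m (2 * r + 2) t := by
  rw [ChevalleyFormula, xiM_succ_eq_of_pos (p := 2 * r + 1) (c := e + 1) (by omega) (by omega) htm,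
    xiM_one_eq_of_pos (t := t) (c := r + e + 1) (by omega) (by omega) htm,
    xiM_one_eq_of_neg (c := r + 1) (by omega) (by omega) (by omega),
    xiP_succ_eq_of_pos (c := e + 1) (by omega) (by omega) htm,
    xiM_succ_eq_of_pos (c := e) (by omega) (by omega) htm]
  have hbot := Pneg_eq_mul_Pneg_add_one (a := e) (b := e + 2 * r + 2) (by omega)
  have hbinom : (e + (2 * r + 2) : Rpoly) * (e + (2 * r + 2)).choose (2 * r + 2) =
      (2 * r + 2) * (e + (2 * r + 2) + 1).choose (2 * r + 2 + 1) +
        (e + (2 * r + 2)).choose (2 * r + 2 + 1) := by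
    exact_mod_cast Nat.add_mul_choose_add e (2 * r + 2)
  push_cast at hbot ⊢
  linear_combination (norm := ring_nf)
    -((2 * r + 2) * ((e + 2 * r + 3).choose (2 * r + 3) : Rpoly)
      + ((e + 2 * r + 2).choose (2 * r + 3) : Rpoly)) * hbot
    + (-va + e * vd) * Pneg (e + 1) (e + 2 * r + 2) * hbinom

lemma chevalleyFormula_of_eq_neg_sub_odd (ht : t = -(2 * r + 2) - (2 * e + 1)) (hmt : -m ≤ t) :
    ChevalleyFormula m (2 * r + 2) t := by
  rw [ChevalleyFormula, xiM_succ_eq_of_neg (p := 2 * r + 1) (c := e + 1) (by omega) (by omega) hmt,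
    xiM_one_eq_of_neg (t := t) (c := r + e + 2) (by omega) (by omega) hmt,
    xiM_one_eq_of_neg (c := r + 1) (by omega) (by omega) (by omega),
    xiP_succ_eq_of_neg (c := e) (by omega) (by omega) hmt,
    xiM_succ_eq_of_neg (c := e + 1) (by omega) (by omega) hmt]
  have htop := Ppos_eq_Ppos_sub_one_mul (a := e + 1) (b := e + 2 * r + 3) (by omega)
  have hbinom : (e + 1 : Rpoly) * (e + (2 * r + 2)).choose (2 * r + 2) =
      (2 * r + 2) * (e + (2 * r + 2)).choose (2 * r + 2 + 1) +
        (e + (2 * r + 2) + 1).choose (2 * r + 2 + 1) := by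
    exact_mod_cast Nat.succ_mul_choose_add e (2 * r + 2)
  push_cast at htop ⊢
  linear_combination (norm := ring_nf)
    -((2 * r + 2) * ((e + 2 * r + 2).choose (2 * r + 3) : Rpoly)
      + ((e + 2 * r + 3).choose (2 * r + 3) : Rpoly)) * htop
    + (va + (e + 2 * r + 3) * vd) * Ppos (e + 1) (e + 2 * r + 2) * hbinom

lemma chevalleyFormula_of_eq_neg_sub_even (ht : t = -(2 * r + 2) - (2 * e + 2)) (hmt : -m ≤ t) :
    ChevalleyFormula m (2 * r + 2) t := by
  rw [ChevalleyFormula, xiM_succ_eq_of_neg (p := 2 * r + 1) (c := e + 2) (by omega) (by omega) hmt,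
    xiM_one_eq_of_neg (t := t) (c := r + e + 2) (by omega) (by omega) hmt,
    xiM_one_eq_of_neg (c := r + 1) (by omega) (by omega) (by omega),
    xiP_succ_eq_of_neg (c := e + 1) (by omega) (by omega) hmt,
    xiM_succ_eq_of_neg (c := e + 1) (by omega) (by omega) hmt]
  have htop := Ppos_eq_Ppos_sub_one_mul (a := e + 2) (b := e + 2 * r + 4) (by omega)
  have hbot := Ppos_eq_mul_Ppos_add_one (a := e + 1) (b := e + 2 * r + 3) (by omega)
  have hbinom : ((e + 1 + (2 * r + 2)).choose (2 * r + 2 + 1) * (2 * r + 2 + 1) : Rpoly) =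
      (e + 1 + (2 * r + 2)).choose (2 * r + 2) * (e + 1) := by
    exact_mod_cast Nat.choose_add_succ_mul (e + 1) (2 * r + 2)
  push_cast at htop hbot ⊢
  linear_combination (norm := ring_nf)
    -(2 * r + 2) * ((e + 2 * r + 3).choose (2 * r + 3) : Rpoly) * htop
    - ((e + 2 * r + 3).choose (2 * r + 3) : Rpoly) * hbot
    - (va + (e + 2 * r + 3) * vd) * Ppos (e + 2) (e + 2 * r + 3) * hbinom

end

theorem statement9_general (m : ℕ) (q : ℕ) (heven : Even q)
    (hq0 : 0 < q)
    (t : ℤ) (ht1 : -(m : ℤ) ≤ t) (ht2 : t ≤ (m : ℤ)) :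
    xiM m q t * (xiM m 1 t - xiM m 1 (-(q : ℤ))) =
      (q : Rpoly) * xiP m (q + 1) t + xiM m (q + 1) t := by
  obtain ⟨r, rfl⟩ : ∃ r, q = 2 * r + 2 := by
    obtain ⟨s, rfl⟩ := heven
    exact ⟨s - 1, by omega⟩
  rcases lt_or_ge t (-(2 * r + 2)) with hlt | hge
  · obtain ⟨e, he | he⟩ : ∃ e : ℕ,
        t = -(2 * r + 2) - (2 * e + 1) ∨ t = -(2 * r + 2) - (2 * e + 2) :=
      ⟨((-t - 2 * r - 3) / 2).toNat, by omega⟩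
    exacts [chevalleyFormula_of_eq_neg_sub_odd r e he ht1,
      chevalleyFormula_of_eq_neg_sub_even r e he ht1]
  rcases le_or_gt t (2 * r + 2) with hle | hgt
  · exact chevalleyFormula_of_abs_le (by omega) (by omega)
  · obtain ⟨e, he | he⟩ : ∃ e : ℕ,
        t = 2 * r + 2 + (2 * e + 1) ∨ t = 2 * r + 2 + (2 * e + 2) :=
      ⟨((t - 2 * r - 3) / 2).toNat, by omega⟩
    exacts [chevalleyFormula_of_eq_add_odd r e he ht2, chevalleyFormula_of_eq_add_even r e he ht2]

/-- for even `0 < q < m`,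
`ξ⁻_q · (ξ⁻_1 − ξ⁻_1(−q)) = q·ξ⁺_{q+1} + ξ⁻_{q+1}` pointwise on `V_m`. -/
theorem statement9 (m : ℕ) (hm : 1 ≤ m) (q : ℕ) (heven : Even q)
    (hq0 : 0 < q) (hqm : q < m)
    (t : ℤ) (ht1 : -(m : ℤ) ≤ t) (ht2 : t ≤ (m : ℤ)) :
    xiM m q t * (xiM m 1 t - xiM m 1 (-(q : ℤ))) =
      (q : Rpoly) * xiP m (q + 1) t + xiM m (q + 1) t :=
  statement9_general m q heven hq0 t ht1 ht2
end
end
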